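/- arXiv:1207.6341 — 3 statements merged into one kernel-verified Lean document; each statement's English description precedes it below -/
import Mathlib

section
/- Let p ≥ 1, q ≥ 1 be integers, ε = ±1, and T_{p+1}, …, T_{p+q} ∈ ℝ. Define φ(z) := ε·(p/(p+1))·z^{p+1} − ε·Σ_{ℓ=1}^q (p/(p+ℓ))·T_{p+ℓ}·z^{p+ℓ}, and the generalized Kac–Schwarz operator (A_{p;T}^ε f)(z) := (Σ_{ℓ=1}^q T_{p+ℓ} z^ℓ)·f(z) + ε·(1/(p z^p))·(z·f'(z) − ((p−1)/2)·f(z)). Then for every smooth f : (0,∞) → ℝ one has A_{p;T}^ε(e^{φ}·f) = e^{φ}·A_p^ε(f) pointwise on (0,∞), where (A_p^ε f)(z) := z·f(z) + ε·(1/(p z^p))·(z·f'(z) − ((p−1)/2)·f(z)). -/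
/-- The Kac–Schwarz operator
`(A_p^ε f)(z) := z·f(z) + ε·(1/(p z^p))·(z·f'(z) − ((p−1)/2)·f(z))`. -/
noncomputable def kacSchwarz (p : ℕ) (ε : ℝ) (f : ℝ → ℝ) : ℝ → ℝ :=
  fun z => z * f z + ε * (1 / (p * z ^ p)) * (z * deriv f z - ((p - 1 : ℝ) / 2) * f z)

/-- The generalized Kac–Schwarz operator
`(A_{p;T}^ε f)(z) := (∑_{ℓ=1}^q T_{p+ℓ} z^ℓ)·f(z) + ε·(1/(p z^p))·(z·f'(z) − ((p−1)/2)·f(z))`. -/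
noncomputable def kacSchwarzGen (p q : ℕ) (ε : ℝ) (T : ℕ → ℝ) (f : ℝ → ℝ) : ℝ → ℝ :=
  fun z => (∑ ℓ ∈ Finset.Icc 1 q, T (p + ℓ) * z ^ ℓ) * f z
    + ε * (1 / (p * z ^ p)) * (z * deriv f z - ((p - 1 : ℝ) / 2) * f z)

/-- The exponent `φ(z) := ε·(p/(p+1))·z^{p+1} − ε·∑_{ℓ=1}^q (p/(p+ℓ))·T_{p+ℓ}·z^{p+ℓ}`. -/
noncomputable def expPhi (p q : ℕ) (ε : ℝ) (T : ℕ → ℝ) : ℝ → ℝ :=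
  fun z => ε * ((p : ℝ) / (p + 1)) * z ^ (p + 1)
    - ε * ∑ ℓ ∈ Finset.Icc 1 q, ((p : ℝ) / (p + ℓ)) * T (p + ℓ) * z ^ (p + ℓ)

lemma expPhi_hasDerivAt (p q : ℕ) (hp : 1 ≤ p) (ε : ℝ) (T : ℕ → ℝ) (z : ℝ) :
    HasDerivAt (expPhi p q ε T)
      (ε * p * z ^ p - ε * ((p : ℝ) * z ^ (p - 1) *
        ∑ ℓ ∈ Finset.Icc 1 q, T (p + ℓ) * z ^ ℓ)) z := by
  have h1 : HasDerivAt (fun t : ℝ => ε * ((p : ℝ) / (p + 1)) * t ^ (p + 1))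
      (ε * (p : ℝ) * z ^ p) z := by
    have h := (hasDerivAt_pow (p + 1) z).const_mul (ε * ((p : ℝ) / (p + 1)))
    convert h using 1
    · rfl
    · rfl
    have hne : ((p : ℝ) + 1) ≠ 0 := by positivity
    push_cast
    field_simp
  have h2 : HasDerivAt
      (fun t : ℝ => ε * ∑ ℓ ∈ Finset.Icc 1 q, ((p : ℝ) / (p + ℓ)) * T (p + ℓ) * t ^ (p + ℓ))
      (ε * ∑ ℓ ∈ Finset.Icc 1 q, (p : ℝ) * T (p + ℓ) * z ^ (p + ℓ - 1)) z := by
    apply HasDerivAt.const_mul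
    apply HasDerivAt.fun_sum
    intro ℓ hℓ
    have hℓ1 : 1 ≤ ℓ := (Finset.mem_Icc.mp hℓ).1
    have h := (hasDerivAt_pow (p + ℓ) z).const_mul (((p : ℝ) / (p + ℓ)) * T (p + ℓ))
    convert h using 1
    · rfl
    have hne : ((p : ℝ) + (ℓ : ℝ)) ≠ 0 := by
      have : (0 : ℝ) < (p : ℝ) + (ℓ : ℝ) := by
        have : (1 : ℝ) ≤ (ℓ : ℝ) := by exact_mod_cast hℓ1
        positivity
      linarith
    push_cast
    field_simp
  have hsum : (∑ ℓ ∈ Finset.Icc 1 q, (p : ℝ) * T (p + ℓ) * z ^ (p + ℓ - 1))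
      = (p : ℝ) * z ^ (p - 1) * ∑ ℓ ∈ Finset.Icc 1 q, T (p + ℓ) * z ^ ℓ := by
    rw [Finset.mul_sum]
    apply Finset.sum_congr rfl
    intro ℓ hℓ
    have : p + ℓ - 1 = (p - 1) + ℓ := by omega
    rw [this, pow_add]
    ring
  have := h1.sub h2
  rw [hsum] at this
  exact this

/-- Conjugation of the Kac–Schwarz operator:
`A_{p;T}^ε (e^φ · f) = e^φ · A_p^ε(f)` pointwise on `(0,∞)`. -/
theorem kacSchwarzGen_conjugation (p q : ℕ) (hp : 1 ≤ p) (hq : 1 ≤ q)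
    (ε : ℝ) (hε : ε = 1 ∨ ε = -1) (T : ℕ → ℝ)
    (f : ℝ → ℝ) (hf : ContDiffOn ℝ (⊤ : ℕ∞) f (Set.Ioi 0)) :
    ∀ z ∈ Set.Ioi (0 : ℝ),
      kacSchwarzGen p q ε T (fun t => Real.exp (expPhi p q ε T t) * f t) z
        = Real.exp (expPhi p q ε T z) * kacSchwarz p ε f z := by
  intro z hz
  have hz0 : (0 : ℝ) < z := hz
  have hzne : z ≠ 0 := ne_of_gt hz0
  have hpne : (p : ℝ) ≠ 0 := Nat.cast_ne_zero.mpr (by omega)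
  have hfd : DifferentiableAt ℝ f z := by
    have := (hf.contDiffAt (isOpen_Ioi.mem_nhds hz0)).differentiableAt (by norm_num)
    exact this
  have hφ := expPhi_hasDerivAt p q hp ε T z
  set S := ∑ ℓ ∈ Finset.Icc 1 q, T (p + ℓ) * z ^ ℓ with hS
  set D := ε * (p : ℝ) * z ^ p - ε * ((p : ℝ) * z ^ (p - 1) * S) with hD
  have hprod : HasDerivAt (fun t => Real.exp (expPhi p q ε T t) * f t)
      (Real.exp (expPhi p q ε T z) * D * f z
        + Real.exp (expPhi p q ε T z) * deriv f z) z := by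
    exact (hφ.exp).mul hfd.hasDerivAt
  simp only [kacSchwarzGen, kacSchwarz, hprod.deriv, ← hS]
  have hzp : z ^ p = z ^ (p - 1) * z := by
    rw [← pow_succ]; congr 1; omega
  set E := Real.exp (expPhi p q ε T z)
  set w := z ^ (p - 1)
  have hw : w ≠ 0 := pow_ne_zero _ hzne
  rw [hD, hzp]
  obtain rfl | rfl := hε <;> field_simp <;> ring
end

section
/- Let q̄ ≥ 1, let y : ℝ → ℝ be smooth, and let ω_0 = 1, ω_1, …, ω_{q̄} : ℝ → ℝ be a Lenard chain for y. Define u(x,ζ) := Σ_{j=0}^{q̄−1} ζ^{q̄−1−j}·ω_j(x), and the 2×2 matrices U(x,ζ) := [[0, 1], [ζ − 2y(x), 0]] and V(x,ζ) := [[−(1/2)∂_x u, u], [(ζ − 2y)·u − (1/2)∂_x² u, (1/2)∂_x u]]. Then the zero-curvature (Lax pair) equation ∂_ζ U − ∂_x V = V·U − U·V holds for all (x,ζ) ∈ ℝ² if and only if 1 + 2ω_{q̄}'(x) = 0 for all x ∈ ℝ, i.e. if and only if there is a constant c with 2ω_{q̄}(x) + x + c = 0 for all x (the q̄-th string equation of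 the Painlevé I hierarchy). -/
/-- Zero-curvature formulation of the Painlevé I hierarchy: given a Lenard chain
`ω_0 = 1, ω_1, …, ω_{q̄}` for `y`, with `u(x,ζ) := ∑_{j=0}^{q̄−1} ζ^{q̄−1−j} ω_j(x)`,
`U := [[0,1],[ζ−2y,0]]` and `V := [[−(1/2)∂ₓu, u],[(ζ−2y)u − (1/2)∂ₓ²u, (1/2)∂ₓu]]`,
the zero-curvature equation `∂_ζ U − ∂ₓ V = [V,U]` holds iff `1 + 2ω_{q̄}' = 0` on `ℝ`,
i.e. iff there is a constant `c` with `2ω_{q̄}(x) + x + c = 0` for all `x`. -/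
theorem zero_curvature_iff_string (qb : ℕ) (hqb : 1 ≤ qb)
    (y : ℝ → ℝ) (hy : ContDiff ℝ (⊤ : ℕ∞) y)
    (ω : ℕ → ℝ → ℝ) (hω : ∀ j, ContDiff ℝ (⊤ : ℕ∞) (ω j)) (hω0 : ω 0 = fun _ => 1)
    (hrec : ∀ j < qb, ∀ x, deriv (ω (j + 1)) x =
      (1 / 4) * iteratedDeriv 3 (ω j) x + 2 * y x * deriv (ω j) x + deriv y x * ω j x) :
    let u : ℝ → ℝ → ℝ := fun x ζ => ∑ j ∈ Finset.range qb, ζ ^ (qb - 1 - j) * ω j x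
    let Umat : ℝ → ℝ → Matrix (Fin 2) (Fin 2) ℝ := fun x ζ => !![0, 1; ζ - 2 * y x, 0]
    let Vmat : ℝ → ℝ → Matrix (Fin 2) (Fin 2) ℝ := fun x ζ =>
      !![-(1 / 2) * deriv (fun s => u s ζ) x, u x ζ;
         (ζ - 2 * y x) * u x ζ - (1 / 2) * iteratedDeriv 2 (fun s => u s ζ) x,
         (1 / 2) * deriv (fun s => u s ζ) x]
    ((∀ x ζ : ℝ,
        (Matrix.of fun i j => deriv (fun w => Umat x w i j) ζ)
          - (Matrix.of fun i j => deriv (fun s => Vmat s ζ i j) x)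
        = Vmat x ζ * Umat x ζ - Umat x ζ * Vmat x ζ)
      ↔ (∀ x : ℝ, 1 + 2 * deriv (ω qb) x = 0)) ∧
    ((∀ x : ℝ, 1 + 2 * deriv (ω qb) x = 0)
      ↔ ∃ c : ℝ, ∀ x : ℝ, 2 * ω qb x + x + c = 0) := by
  -- smoothness of all iterated derivatives
  have hωi : ∀ j, ContDiff ℝ (⊤ : ℕ∞) (ω j) := fun j => (hω j).of_le (by simp)
  have hyi : ContDiff ℝ (⊤ : ℕ∞) y := hy.of_le (by simp)
  have hsm : ∀ (n : ℕ) j, ContDiff ℝ (⊤ : ℕ∞) (iteratedDeriv n (ω j)) := by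
    intro n
    induction n with
    | zero => intro j; simpa [iteratedDeriv_zero] using hωi j
    | succ n ih =>
      intro j
      rw [iteratedDeriv_succ]
      exact (contDiff_infty_iff_deriv.mp (ih j)).2
  have hsd : ∀ (n : ℕ) j, Differentiable ℝ (iteratedDeriv n (ω j)) :=
    fun n j => (hsm n j).differentiable (by simp)
  intro u Umat Vmat
  -- iterated derivatives of u in x
  have hD : ∀ (ζ : ℝ) (n : ℕ),
      iteratedDeriv n (fun s => u s ζ)
        = fun x => ∑ j ∈ Finset.range qb, ζ ^ (qb - 1 - j) * iteratedDeriv n (ω j) x := by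
    intro ζ n
    induction n with
    | zero => funext x; simp [iteratedDeriv_zero, u]
    | succ n ih =>
      funext x
      rw [iteratedDeriv_succ, ih,
        deriv_fun_sum (fun j _ => (((hsd n j) x).const_mul _))]
      refine Finset.sum_congr rfl fun j _ => ?_
      rw [deriv_const_mul _ ((hsd n j) x), ← iteratedDeriv_succ]
  have hD1 : ∀ (ζ : ℝ), deriv (fun s => u s ζ)
      = fun x => ∑ j ∈ Finset.range qb, ζ ^ (qb - 1 - j) * deriv (ω j) x := by
    intro ζ
    have := hD ζ 1
    simp only [iteratedDeriv_one] at this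
    exact this
    
  -- key telescoping identity
  have hkey : ∀ (ζ x : ℝ),
      2 * deriv y x * (∑ j ∈ Finset.range qb, ζ ^ (qb - 1 - j) * ω j x)
        + (1 / 2) * (∑ j ∈ Finset.range qb, ζ ^ (qb - 1 - j) * iteratedDeriv 3 (ω j) x)
        + 4 * y x * (∑ j ∈ Finset.range qb, ζ ^ (qb - 1 - j) * deriv (ω j) x)
        - 2 * ζ * (∑ j ∈ Finset.range qb, ζ ^ (qb - 1 - j) * deriv (ω j) x)
      = 2 * deriv (ω qb) x := by
    intro ζ x
    have step : ∀ j ∈ Finset.range qb,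
        2 * ζ ^ (qb - (j + 1)) * deriv (ω (j + 1)) x - 2 * ζ ^ (qb - j) * deriv (ω j) x
        = 2 * deriv y x * (ζ ^ (qb - 1 - j) * ω j x)
          + (1 / 2) * (ζ ^ (qb - 1 - j) * iteratedDeriv 3 (ω j) x)
          + 4 * y x * (ζ ^ (qb - 1 - j) * deriv (ω j) x)
          - 2 * ζ * (ζ ^ (qb - 1 - j) * deriv (ω j) x) := by
      intro j hj
      have hj' := Finset.mem_range.mp hj
      have e1 : qb - (j + 1) = qb - 1 - j := by omega
      have e2 : qb - j = (qb - 1 - j) + 1 := by omega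
      rw [e1, e2, pow_succ', hrec j hj']
      ring
    calc 2 * deriv y x * (∑ j ∈ Finset.range qb, ζ ^ (qb - 1 - j) * ω j x)
        + (1 / 2) * (∑ j ∈ Finset.range qb, ζ ^ (qb - 1 - j) * iteratedDeriv 3 (ω j) x)
        + 4 * y x * (∑ j ∈ Finset.range qb, ζ ^ (qb - 1 - j) * deriv (ω j) x)
        - 2 * ζ * (∑ j ∈ Finset.range qb, ζ ^ (qb - 1 - j) * deriv (ω j) x)
        = ∑ j ∈ Finset.range qb,
            (2 * ζ ^ (qb - (j + 1)) * deriv (ω (j + 1)) x - 2 * ζ ^ (qb - j) * deriv (ω j) x) := by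
          rw [Finset.mul_sum, Finset.mul_sum, Finset.mul_sum, Finset.mul_sum,
            ← Finset.sum_add_distrib, ← Finset.sum_add_distrib, ← Finset.sum_sub_distrib]
          exact (Finset.sum_congr rfl step).symm
      _ = 2 * ζ ^ (qb - qb) * deriv (ω qb) x - 2 * ζ ^ (qb - 0) * deriv (ω 0) x :=
          Finset.sum_range_sub (fun k => 2 * ζ ^ (qb - k) * deriv (ω k) x) qb
      _ = 2 * deriv (ω qb) x := by simp [hω0]
  have hentry : ∀ x ζ : ℝ,
      ((Matrix.of fun i j => deriv (fun w => Umat x w i j) ζ)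
          - (Matrix.of fun i j => deriv (fun s => Vmat s ζ i j) x)
        = Vmat x ζ * Umat x ζ - Umat x ζ * Vmat x ζ)
      ↔ (1 + 2 * deriv (ω qb) x = 0) := by
    intro x ζ
    have hyd : Differentiable ℝ y := hyi.differentiable (by simp)
    have hdn : ∀ n : ℕ, Differentiable ℝ (iteratedDeriv n (fun s => u s ζ)) := by
      intro n
      rw [hD ζ n]
      exact Differentiable.fun_sum (fun j _ => ((hsd n j).const_mul _))
    have hdf : Differentiable ℝ (fun s => u s ζ) := by
      have := hdn 0; rwa [iteratedDeriv_zero] at this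
    have d1 : HasDerivAt (fun s => u s ζ) (deriv (fun s => u s ζ) x) x :=
      (hdf x).hasDerivAt
    have ddd1 : HasDerivAt (deriv (fun s => u s ζ))
        (iteratedDeriv 2 (fun s => u s ζ) x) x := by
      have h := (hdn 1 x).hasDerivAt
      rw [← iteratedDeriv_succ] at h
      rwa [iteratedDeriv_one] at h
    have ddd2 : HasDerivAt (iteratedDeriv 2 (fun s => u s ζ))
        (iteratedDeriv 3 (fun s => u s ζ) x) x := by
      have h := (hdn 2 x).hasDerivAt
      rwa [← iteratedDeriv_succ] at h
    have ha : HasDerivAt (fun s => ζ - 2 * y s) (-(2 * deriv y x)) x :=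
      HasDerivAt.const_sub ζ ((hyd x).hasDerivAt.const_mul 2)
    have d00f : deriv (fun s => -(1 / 2) * deriv (fun s' => u s' ζ) s) x
        = -(1 / 2) * iteratedDeriv 2 (fun s => u s ζ) x :=
      (ddd1.const_mul (-(1 / 2))).deriv
    have d11f : deriv (fun s => 1 / 2 * deriv (fun s' => u s' ζ) s) x
        = 1 / 2 * iteratedDeriv 2 (fun s => u s ζ) x :=
      (ddd1.const_mul (1 / 2)).deriv
    have d10f : deriv (fun s => (ζ - 2 * y s) * u s ζ
          - 1 / 2 * iteratedDeriv 2 (fun s' => u s' ζ) s) x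
        = -(2 * deriv y x) * u x ζ + (ζ - 2 * y x) * deriv (fun s => u s ζ) x
          - 1 / 2 * iteratedDeriv 3 (fun s => u s ζ) x :=
      ((ha.mul d1).sub (ddd2.const_mul (1 / 2))).deriv
    have hsum : 2 * deriv y x * u x ζ
          + 1 / 2 * iteratedDeriv 3 (fun s => u s ζ) x
          + 4 * y x * deriv (fun s => u s ζ) x
          - 2 * ζ * deriv (fun s => u s ζ) x
        = 2 * deriv (ω qb) x := by
      have h := hkey ζ x
      simp only [u, hD ζ 3, hD1 ζ]
      exact h
    constructor
    · intro h
      have h10 := congr_fun (congr_fun h 1) 0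
      simp only [Umat, Vmat, Matrix.sub_apply, Matrix.of_apply, Matrix.mul_apply,
        Fin.sum_univ_two, Matrix.cons_val', Matrix.cons_val_zero, Matrix.cons_val_one,
        Matrix.head_cons, Matrix.head_fin_const, Matrix.empty_val',
        Matrix.cons_val_fin_one] at h10
      rw [d10f] at h10
      simp only [deriv_sub_const, deriv_id''] at h10
      linear_combination h10 - hsum
    · intro h
      ext i j
      fin_cases i <;> fin_cases j <;>
        simp only [Umat, Vmat, Matrix.sub_apply, Matrix.of_apply, Matrix.mul_apply,
          Fin.sum_univ_two, Matrix.cons_val', Matrix.cons_val_zero, Matrix.cons_val_one,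
          Matrix.head_cons, Matrix.head_fin_const, Matrix.empty_val',
          Matrix.cons_val_fin_one, deriv_const', Fin.mk_zero, Fin.mk_one, Fin.isValue]
      · rw [d00f]; ring
      · ring
      · rw [d10f]
        simp only [deriv_sub_const, deriv_id'']
        linear_combination h + hsum
      · rw [d11f]; ring
  constructor
  · exact ⟨fun h x => (hentry x 0).mp (h x 0), fun h x ζ => (hentry x ζ).mpr (h x)⟩
  · constructor
    · intro h
      refine ⟨-(2 * ω qb 0 + 0), fun x => ?_⟩
      have hdiff : Differentiable ℝ (fun t => 2 * ω qb t + t) :=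
        (((hωi qb).differentiable (by simp)).const_mul 2).add differentiable_id
      have hz : ∀ t, deriv (fun t => 2 * ω qb t + t) t = 0 := by
        intro t
        have hda : HasDerivAt (fun t => 2 * ω qb t + t) (2 * deriv (ω qb) t + 1) t :=
          ((((hωi qb).differentiable (by simp)) t).hasDerivAt.const_mul 2).add
            (hasDerivAt_id t)
        rw [hda.deriv]
        linarith [h t]
      have := is_const_of_deriv_eq_zero hdiff hz x 0
      linarith
    · rintro ⟨c, hc⟩ x
      have hfun : ω qb = fun t => -t / 2 - c / 2 := by
        funext t; linarith [hc t]
      rw [hfun]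
      have hda : HasDerivAt (fun t : ℝ => -t / 2 - c / 2) (-1 / 2) x :=
        (((hasDerivAt_id x).neg).div_const 2).sub_const (c / 2)
      rw [hda.deriv]; ring
end

section
/- Let y : ℝ → ℝ be smooth and define the 2×2 matrices U(x,ζ) := [[0, 1], [ζ − 2y(x), 0]] and V(x,ζ) := [[−y'(x)/2, ζ + y(x)], [ζ² − ζ·y(x) − 2y(x)² − (1/2)y''(x), y'(x)/2]]. Then the zero-curvature equation ∂_ζ U − ∂_x V = V·U − U·V holds for all (x,ζ) ∈ ℝ² if and only if 6y·y' + (1/2)y''' + 1 = 0 on ℝ, i.e. if and only if there is a constant c_2 with 3y² + (1/2)y'' + x + c_2 = 0 for all x (the first nontrivial member of the Painlevé I hierarchy). -/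
/-- Zero-curvature formulation of the first nontrivial member of the Painlevé I
hierarchy: for `U := [[0,1],[ζ−2y,0]]` and
`V := [[−y'/2, ζ+y],[ζ² − ζy − 2y² − (1/2)y'', y'/2]]`, the zero-curvature equation
`∂_ζ U − ∂ₓ V = [V,U]` holds iff `6y·y' + (1/2)y''' + 1 = 0` on `ℝ`, i.e. iff there is
a constant `c₂` with `3y² + (1/2)y'' + x + c₂ = 0` for all `x`. -/
theorem zero_curvature_iff_PI (y : ℝ → ℝ) (hy : ContDiff ℝ (⊤ : ℕ∞) y) :
    let Umat : ℝ → ℝ → Matrix (Fin 2) (Fin 2) ℝ := fun x ζ => !![0, 1; ζ - 2 * y x, 0]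
    let Vmat : ℝ → ℝ → Matrix (Fin 2) (Fin 2) ℝ := fun x ζ =>
      !![-(deriv y x) / 2, ζ + y x;
         ζ ^ 2 - ζ * y x - 2 * y x ^ 2 - (1 / 2) * iteratedDeriv 2 y x,
         (deriv y x) / 2]
    ((∀ x ζ : ℝ,
        (Matrix.of fun i j => deriv (fun w => Umat x w i j) ζ)
          - (Matrix.of fun i j => deriv (fun s => Vmat s ζ i j) x)
        = Vmat x ζ * Umat x ζ - Umat x ζ * Vmat x ζ)
      ↔ (∀ x : ℝ, 6 * y x * deriv y x + (1 / 2) * iteratedDeriv 3 y x + 1 = 0)) ∧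
    ((∀ x : ℝ, 6 * y x * deriv y x + (1 / 2) * iteratedDeriv 3 y x + 1 = 0)
      ↔ ∃ c₂ : ℝ, ∀ x : ℝ, 3 * y x ^ 2 + (1 / 2) * iteratedDeriv 2 y x + x + c₂ = 0) := by
  intro Umat Vmat
  have hy' : ContDiff ℝ (⊤ : ℕ∞) y := hy.of_le (by simp)
  have hdy : ContDiff ℝ (⊤ : ℕ∞) (deriv y) := (contDiff_infty_iff_deriv.mp hy').2
  have hddy : ContDiff ℝ (⊤ : ℕ∞) (deriv (deriv y)) := (contDiff_infty_iff_deriv.mp hdy).2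
  have e2 : iteratedDeriv 2 y = deriv (deriv y) := by
    rw [iteratedDeriv_succ, iteratedDeriv_one]
  have e3 : iteratedDeriv 3 y = deriv (iteratedDeriv 2 y) := by
    rw [iteratedDeriv_succ]
  have h1 : ∀ x : ℝ, HasDerivAt y (deriv y x) x := fun x =>
    ((hy'.differentiable (by simp)) x).hasDerivAt
  have h2 : ∀ x : ℝ, HasDerivAt (deriv y) (iteratedDeriv 2 y x) x := fun x => by
    rw [e2]; exact ((hdy.differentiable (by simp)) x).hasDerivAt
  have h3 : ∀ x : ℝ, HasDerivAt (iteratedDeriv 2 y) (iteratedDeriv 3 y x) x := fun x => by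
    rw [e3, e2]; exact ((hddy.differentiable (by simp)) x).hasDerivAt
  -- scalar derivative computations for the matrix entries
  have dU : ∀ x ζ : ℝ, deriv (fun w : ℝ => w - 2 * y x) ζ = 1 := fun x ζ =>
    ((hasDerivAt_id ζ).sub_const (2 * y x)).deriv
  have dV00 : ∀ x : ℝ, deriv (fun s => -deriv y s / 2) x = -(iteratedDeriv 2 y x) / 2 :=
    fun x => (((h2 x).neg).div_const 2).deriv
  have dV01 : ∀ x ζ : ℝ, deriv (fun s => ζ + y s) x = deriv y x := fun x ζ =>
    ((h1 x).const_add ζ).deriv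
  have dV11 : ∀ x : ℝ, deriv (fun s => deriv y s / 2) x = iteratedDeriv 2 y x / 2 :=
    fun x => ((h2 x).div_const 2).deriv
  have dV10 : ∀ x ζ : ℝ,
      deriv (fun s => ζ ^ 2 - ζ * y s - 2 * y s ^ 2 - 1 / 2 * iteratedDeriv 2 y s) x
        = 0 - ζ * deriv y x - 2 * ((2 : ℕ) * y x ^ 1 * deriv y x)
          - 1 / 2 * iteratedDeriv 3 y x := fun x ζ =>
    ((((hasDerivAt_const x (ζ ^ 2)).sub ((h1 x).const_mul ζ)).sub
      (((h1 x).pow 2).const_mul 2)).sub ((h3 x).const_mul (1 / 2))).deriv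
  constructor
  · constructor
    · intro h x
      have hx := congrFun (congrFun (h x 0) 1) 0
      simp only [Umat, Vmat, Matrix.sub_apply, Matrix.of_apply, Matrix.mul_apply,
        Fin.sum_univ_two, Matrix.cons_val', Matrix.cons_val_zero, Matrix.cons_val_one,
        Matrix.head_cons, Matrix.head_fin_const, Matrix.empty_val',
        Matrix.cons_val_fin_one, Fin.mk_zero, Fin.mk_one] at hx
      rw [dU x 0, dV10 x 0] at hx
      push_cast at hx
      nlinarith [hx]
    · intro hODE x ζ
      ext i j
      fin_cases i <;> fin_cases j <;>
        simp only [Umat, Vmat, Matrix.sub_apply, Matrix.of_apply, Matrix.mul_apply,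
          Fin.sum_univ_two, Matrix.cons_val', Matrix.cons_val_zero, Matrix.cons_val_one,
          Matrix.head_cons, Matrix.head_fin_const, Matrix.empty_val',
          Matrix.cons_val_fin_one, Fin.mk_zero, Fin.mk_one]
      · rw [deriv_const, dV00 x]; ring
      · rw [deriv_const, dV01 x ζ]; ring
      · rw [dU x ζ, dV10 x ζ]
        have := hODE x
        push_cast
        nlinarith [this]
      · rw [deriv_const, dV11 x]; ring
  · have hdF : ∀ x : ℝ,
        HasDerivAt (fun x => 3 * y x ^ 2 + 1 / 2 * iteratedDeriv 2 y x + x)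
          (3 * ((2 : ℕ) * y x ^ (2 - 1) * deriv y x) + 1 / 2 * iteratedDeriv 3 y x + 1) x :=
      fun x => ((((h1 x).pow 2).const_mul 3).add ((h3 x).const_mul (1 / 2))).add
        (hasDerivAt_id' x)
    constructor
    · intro hODE
      refine ⟨-(3 * y 0 ^ 2 + 1 / 2 * iteratedDeriv 2 y 0 + 0), fun x => ?_⟩
      have key := is_const_of_deriv_eq_zero (f := fun x => 3 * y x ^ 2
          + 1 / 2 * iteratedDeriv 2 y x + x)
        (fun z => (hdF z).differentiableAt)
        (fun z => by rw [(hdF z).deriv]; push_cast; nlinarith [hODE z]) x 0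
      linarith [key]
    · rintro ⟨c₂, hc⟩ x
      have hzero : deriv (fun x => 3 * y x ^ 2 + 1 / 2 * iteratedDeriv 2 y x + x + c₂) x = 0 := by
        have : (fun x => 3 * y x ^ 2 + 1 / 2 * iteratedDeriv 2 y x + x + c₂)
            = fun _ => (0 : ℝ) := funext hc
        rw [this, deriv_const]
      rw [((hdF x).add_const c₂).deriv] at hzero
      push_cast at hzero
      nlinarith [hzero]
end
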